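/- arXiv:quant-ph/0512142 — 2 statements merged into one kernel-verified Lean document; each statement's English description precedes it below -/
import Mathlib

section
/- Two quantum operations E_1 and E_2 on ℂ^d can be unambiguously discriminated by a single use if and only if supp(E_1) is not contained in supp(E_2) and supp(E_2) is not contained in supp(E_1). -/
open Matrix Kronecker
open scoped ComplexOrder

noncomputable section

/-- A quantum operation on ℂ^d given by a finite family of Kraus operators
satisfying the completeness condition. -/
structure QuantumOp (d : ℕ) where
  m : ℕ
  K : Fin m → Matrix (Fin d) (Fin d) ℂ
  complete : ∑ k, (K k)ᴴ * K k = 1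

/-- The support of a quantum operation: the span of its Kraus operators. -/
def QuantumOp.supp {d : ℕ} (E : QuantumOp d) : Submodule ℂ (Matrix (Fin d) (Fin d) ℂ) :=
  Submodule.span ℂ (Set.range E.K)

/-- The output state (E ⊗ I)(|ψ⟩⟨ψ|) = Σ_k (E^k ⊗ I)|ψ⟩⟨ψ|(E^k ⊗ I)†. -/
def QuantumOp.output {d : ℕ} (E : QuantumOp d) (da : ℕ) (ψ : Fin d × Fin da → ℂ) :
    Matrix (Fin d × Fin da) (Fin d × Fin da) ℂ :=
  ∑ k, (E.K k ⊗ₖ (1 : Matrix (Fin da) (Fin da) ℂ)) * vecMulVec ψ (star ψ) *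
    (E.K k ⊗ₖ (1 : Matrix (Fin da) (Fin da) ℂ))ᴴ

/-- States σ_1, …, σ_n are unambiguously distinguishable if there is a POVM
{Π_0, Π_1, …, Π_n} with tr(Π_i σ_j) = 0 for i ≠ j and tr(Π_i σ_i) > 0. -/
def UnambiguouslyDistinguishable {μ : Type*} [Fintype μ] [DecidableEq μ] {n : ℕ}
    (σ : Fin n → Matrix μ μ ℂ) : Prop :=
  ∃ P0 : Matrix μ μ ℂ, ∃ P : Fin n → Matrix μ μ ℂ,
    P0.PosSemidef ∧ (∀ i, (P i).PosSemidef) ∧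
    (P0 + ∑ i, P i = 1) ∧
    (∀ i j, i ≠ j → (P i * σ j).trace = 0) ∧
    (∀ i, 0 < (P i * σ i).trace)

/-- The operations E_1, …, E_n are unambiguously distinguishable by a single use. -/
def UnambigSingleUse {d n : ℕ} (E : Fin n → QuantumOp d) : Prop :=
  ∃ da : ℕ, 0 < da ∧ ∃ ψ : Fin d × Fin da → ℂ,
    star ψ ⬝ᵥ ψ = 1 ∧
    UnambiguouslyDistinguishable (fun i => (E i).output da ψ)

/-! If `P ≥ 0`, then `tr(P (E ⊗ I)(|ψ⟩⟨ψ|)) = ∑ₖ ⟨(Eᵏ ⊗ I)ψ, P (Eᵏ ⊗ I)ψ⟩` vanishes iff `P` kills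
`(A ⊗ I)ψ` for every `A ∈ supp E`. So if `supp E₁ ⊆ supp E₂`, a POVM element that never fires on
`E₂` never fires on `E₁` either. Conversely, for the maximally entangled `ψ` the map
`A ↦ (A ⊗ I)ψ` is injective, so `supp E₁ ⊄ supp E₂` gives a unit vector `v₁` orthogonal to the
image of `supp E₂` but not to that of `supp E₁`; with `v₂` obtained symmetrically,
`Πᵢ = ½ |vᵢ⟩⟨vᵢ|` and `Π₀ = ½ (1 - |v₁⟩⟨v₁|) + ½ (1 - |v₂⟩⟨v₂|)` discriminate unambiguously. -/

open scoped InnerProductSpace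

theorem Submodule.exists_norm_eq_one_mem_orthogonal_inner_ne_zero {𝕜 E : Type*} [RCLike 𝕜]
    [NormedAddCommGroup E] [InnerProductSpace 𝕜 E] {U V : Submodule 𝕜 E}
    [V.HasOrthogonalProjection] (h : ¬ U ≤ V) :
    ∃ v ∈ Vᗮ, ‖v‖ = 1 ∧ ∃ u ∈ U, ⟪v, u⟫_𝕜 ≠ 0 := by
  obtain ⟨u, hu, huV⟩ := Set.not_subset.mp h
  rw [SetLike.mem_coe, ← V.orthogonal_orthogonal, Submodule.mem_orthogonal] at huV
  push Not at huV
  obtain ⟨w, hw, hwu⟩ := huV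
  have hw0 : w ≠ 0 := by rintro rfl; simp at hwu
  refine ⟨(‖w‖⁻¹ : 𝕜) • w, Vᗮ.smul_mem _ hw, norm_smul_inv_norm hw0, u, hu, ?_⟩
  rw [inner_smul_left]
  exact mul_ne_zero (by simpa using hw0) hwu

theorem Submodule.exists_separating_unit_vector {𝕜 ι : Type*} [RCLike 𝕜]
    [Fintype ι] {U V : Submodule 𝕜 (ι → 𝕜)} (h : ¬ U ≤ V) :
    ∃ v : ι → 𝕜, star v ⬝ᵥ v = 1 ∧ (∀ x ∈ V, star v ⬝ᵥ x = 0) ∧ ∃ x ∈ U, star v ⬝ᵥ x ≠ 0 := by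
  let e := (WithLp.linearEquiv 2 𝕜 (ι → 𝕜)).symm.toLinearMap
  have h' : ¬ U.map e ≤ V.map e := by
    rwa [Submodule.map_le_map_iff_of_injective (WithLp.linearEquiv 2 𝕜 _).symm.injective]
  obtain ⟨v, hv, hv1, _, ⟨x, hx, rfl⟩, hvx⟩ :=
    exists_norm_eq_one_mem_orthogonal_inner_ne_zero h'
  have inner_eq (y : ι → 𝕜) : ⟪v, e y⟫_𝕜 = star v.ofLp ⬝ᵥ y := dotProduct_comm _ _
  refine ⟨v.ofLp, ?_, fun y hy => ?_, x, hx, (inner_eq x) ▸ hvx⟩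
  · rw [← inner_eq, ← v.toLp_ofLp]
    simp [e, inner_self_eq_norm_sq_to_K, hv1]
  · rw [← inner_eq]
    exact (Submodule.mem_orthogonal' _ _).mp hv _ (Submodule.mem_map_of_mem hy)

namespace Matrix

def kroneckerOneMulVecLin {R m n : Type*} [CommSemiring R] [Fintype m] [Fintype n]
    [DecidableEq n] (ψ : m × n → R) : Matrix m m R →ₗ[R] (m × n → R) where
  toFun A := (A ⊗ₖ 1) *ᵥ ψ
  map_add' A B := by simp only [add_kronecker, add_mulVec]
  map_smul' c A := by simp only [smul_kronecker, smul_mulVec, RingHom.id_apply]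

variable {𝕜 n : Type*} [RCLike 𝕜] [Fintype n]

theorem posSemidef_one_sub_vecMulVec_star [DecidableEq n] {v : n → 𝕜} (hv : star v ⬝ᵥ v = 1) :
    (1 - vecMulVec v (star v)).PosSemidef := by
  set Q := 1 - vecMulVec v (star v)
  have hQ : Qᴴ = Q := by simp [Q, conjTranspose_vecMulVec]
  have hQQ : Q * Q = Q := by
    simp only [Q, sub_mul, mul_sub, one_mul, mul_one, vecMulVec_mul_vecMulVec, hv, one_smul]
    abel
  rw [← hQQ]
  nth_rewrite 1 [← hQ]
  exact posSemidef_conjTranspose_mul_self Q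

theorem vecMulVec_star_mulVec_eq_zero_iff {v : n → 𝕜} (hv : v ≠ 0) (x : n → 𝕜) :
    vecMulVec v (star v) *ᵥ x = 0 ↔ star v ⬝ᵥ x = 0 := by
  rw [vecMulVec_mulVec, op_smul_eq_smul, smul_eq_zero, or_iff_left hv]

end Matrix

theorem UnambiguouslyDistinguishable.of_unit_vectors {μ : Type*} [Fintype μ]
    [DecidableEq μ] {n : ℕ} [NeZero n] {σ : Fin n → Matrix μ μ ℂ} (v : Fin n → μ → ℂ)
    (hv : ∀ i, star (v i) ⬝ᵥ v i = 1)
    (hoff : ∀ i j, i ≠ j → (vecMulVec (v i) (star (v i)) * σ j).trace = 0)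
    (hdiag : ∀ i, 0 < (vecMulVec (v i) (star (v i)) * σ i).trace) :
    UnambiguouslyDistinguishable σ := by
  have hn : (0 : ℂ) < (n : ℂ)⁻¹ := inv_pos.mpr (by exact_mod_cast NeZero.pos n)
  set P : Fin n → Matrix μ μ ℂ := fun i => (n : ℂ)⁻¹ • vecMulVec (v i) (star (v i))
  have hP0 : 1 - ∑ i, P i = ∑ i, (n : ℂ)⁻¹ • (1 - vecMulVec (v i) (star (v i))) := by
    simp only [P, smul_sub, Finset.sum_sub_distrib, Finset.sum_const, Finset.card_univ,
      Fintype.card_fin, ← Nat.cast_smul_eq_nsmul ℂ, smul_smul,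
      mul_inv_cancel₀ (NeZero.ne (n : ℂ)), one_smul]
  refine ⟨1 - ∑ i, P i, P, ?_, fun i => (posSemidef_vecMulVec_self_star _).smul hn.le,
    sub_add_cancel _ _, fun i j hij => ?_, fun i => ?_⟩
  · rw [hP0]
    exact posSemidef_sum _ fun i _ => (posSemidef_one_sub_vecMulVec_star (hv i)).smul hn.le
  · simp only [P, smul_mul_assoc, trace_smul, hoff i j hij, smul_zero]
  · simp only [P, smul_mul_assoc, trace_smul, smul_eq_mul]
    exact mul_pos hn (hdiag i)

namespace QuantumOp

variable {d da : ℕ} (E : QuantumOp d) (ψ : Fin d × Fin da → ℂ)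

theorem output_eq_sum_vecMulVec :
    E.output da ψ = ∑ k, vecMulVec (kroneckerOneMulVecLin ψ (E.K k))
      (star (kroneckerOneMulVecLin ψ (E.K k))) := by
  refine Finset.sum_congr rfl fun k _ => ?_
  rw [mul_vecMulVec, vecMulVec_mul, ← star_mulVec]
  rfl

theorem trace_mul_output (P : Matrix (Fin d × Fin da) (Fin d × Fin da) ℂ) :
    (P * E.output da ψ).trace = ∑ k, star (kroneckerOneMulVecLin ψ (E.K k)) ⬝ᵥ
      (P *ᵥ kroneckerOneMulVecLin ψ (E.K k)) := by
  simp only [output_eq_sum_vecMulVec, Finset.mul_sum, trace_sum, mul_vecMulVec, trace_vecMulVec,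
    dotProduct_comm (P *ᵥ _)]

variable {E ψ} {P : Matrix (Fin d × Fin da) (Fin d × Fin da) ℂ}

theorem trace_mul_output_nonneg (hP : P.PosSemidef) : 0 ≤ (P * E.output da ψ).trace := by
  rw [trace_mul_output]
  exact Finset.sum_nonneg fun k _ => hP.dotProduct_mulVec_nonneg _

theorem trace_mul_output_eq_zero_iff (hP : P.PosSemidef) :
    (P * E.output da ψ).trace = 0 ↔ ∀ A ∈ E.supp, P *ᵥ kroneckerOneMulVecLin ψ A = 0 := by
  have hker : (∀ A ∈ E.supp, P *ᵥ kroneckerOneMulVecLin ψ A = 0) ↔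
      E.supp ≤ LinearMap.ker (P.mulVecLin ∘ₗ kroneckerOneMulVecLin ψ) := Iff.rfl
  rw [hker, supp, Submodule.span_le, Set.range_subset_iff, trace_mul_output,
    Finset.sum_eq_zero_iff_of_nonneg fun k _ => hP.dotProduct_mulVec_nonneg _]
  simp [hP.dotProduct_mulVec_zero_iff]

theorem trace_mul_output_pos_iff (hP : P.PosSemidef) :
    0 < (P * E.output da ψ).trace ↔ ∃ A ∈ E.supp, P *ᵥ kroneckerOneMulVecLin ψ A ≠ 0 := by
  rw [(trace_mul_output_nonneg hP).lt_iff_ne', Ne, trace_mul_output_eq_zero_iff hP]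
  push Not
  rfl

theorem exists_unit_vector_separating_outputs (hψ : Function.Injective (kroneckerOneMulVecLin ψ))
    {E F : QuantumOp d} (h : ¬ E.supp ≤ F.supp) :
    ∃ v, star v ⬝ᵥ v = 1 ∧ (vecMulVec v (star v) * F.output da ψ).trace = 0 ∧
      0 < (vecMulVec v (star v) * E.output da ψ).trace := by
  obtain ⟨v, hv1, hvF, _, ⟨A, hA, rfl⟩, hvA⟩ :=
    Submodule.exists_separating_unit_vector
      (U := E.supp.map (kroneckerOneMulVecLin ψ)) (V := F.supp.map (kroneckerOneMulVecLin ψ))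
      (by rwa [Submodule.map_le_map_iff_of_injective hψ])
  have hv0 : v ≠ 0 := by rintro rfl; simp at hv1
  have hP := posSemidef_vecMulVec_self_star v
  refine ⟨v, hv1, (trace_mul_output_eq_zero_iff hP).mpr fun B hB => ?_,
    (trace_mul_output_pos_iff hP).mpr ⟨A, hA, ?_⟩⟩
  · exact (vecMulVec_star_mulVec_eq_zero_iff hv0 _).mpr (hvF _ (Submodule.mem_map_of_mem hB))
  · rwa [Ne, vecMulVec_star_mulVec_eq_zero_iff hv0]

theorem unambiguouslyDistinguishable_output_pair
    (hψ : Function.Injective (kroneckerOneMulVecLin ψ)) {E₁ E₂ : QuantumOp d}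
    (h₁ : ¬ E₁.supp ≤ E₂.supp) (h₂ : ¬ E₂.supp ≤ E₁.supp) :
    UnambiguouslyDistinguishable fun i => (![E₁, E₂] i).output da ψ := by
  obtain ⟨v₁, hv₁, h₁₂, h₁₁⟩ := exists_unit_vector_separating_outputs hψ h₁
  obtain ⟨v₂, hv₂, h₂₁, h₂₂⟩ := exists_unit_vector_separating_outputs hψ h₂
  refine .of_unit_vectors ![v₁, v₂] ?_ ?_ ?_
  · intro i; fin_cases i <;> assumption
  · intro i j hij; fin_cases i <;> fin_cases j <;> first | exact absurd rfl hij | assumption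
  · intro i; fin_cases i <;> assumption

end QuantumOp

theorem UnambigSingleUse.not_supp_le {d n : ℕ} {E : Fin n → QuantumOp d}
    (h : UnambigSingleUse E) {i j : Fin n} (hij : i ≠ j) : ¬ (E i).supp ≤ (E j).supp := by
  intro hle
  obtain ⟨da, -, ψ, -, -, P, -, hP, -, hoff, hdiag⟩ := h
  obtain ⟨A, hA, hPA⟩ := (QuantumOp.trace_mul_output_pos_iff (hP i)).mp (hdiag i)
  exact hPA ((QuantumOp.trace_mul_output_eq_zero_iff (hP i)).mp (hoff i j hij) A (hle hA))

def maxEntangled (d : ℕ) : Fin d × Fin d → ℂ :=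
  (Real.sqrt d : ℂ)⁻¹ • vec (1 : Matrix (Fin d) (Fin d) ℂ)

theorem star_maxEntangled_dotProduct {d : ℕ} (hd : d ≠ 0) :
    star (maxEntangled d) ⬝ᵥ maxEntangled d = 1 := by
  have hsq : (Real.sqrt d : ℂ) ^ 2 = d := by
    exact_mod_cast Real.sq_sqrt (Nat.cast_nonneg d)
  simp only [maxEntangled, star_smul, smul_dotProduct, dotProduct_smul, star_vec_dotProduct_vec,
    conjTranspose_one, one_mul, trace_one, Fintype.card_fin, star_inv₀, Complex.star_def,
    Complex.conj_ofReal, smul_eq_mul]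
  field_simp
  exact hsq.symm

theorem kroneckerOneMulVecLin_maxEntangled {d : ℕ} (A : Matrix (Fin d) (Fin d) ℂ) :
    kroneckerOneMulVecLin (maxEntangled d) A = (Real.sqrt d : ℂ)⁻¹ • vec Aᵀ := by
  simp only [kroneckerOneMulVecLin, LinearMap.coe_mk, AddHom.coe_mk, maxEntangled, mulVec_smul,
    kronecker_mulVec_vec, Matrix.mul_one, Matrix.one_mul]

theorem kroneckerOneMulVecLin_maxEntangled_injective {d : ℕ} (hd : d ≠ 0) :
    Function.Injective (kroneckerOneMulVecLin (maxEntangled d)) := by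
  intro A B hAB
  simp only [kroneckerOneMulVecLin_maxEntangled] at hAB
  have hsq0 : (Real.sqrt d : ℂ)⁻¹ ≠ 0 := by
    simpa using (Real.sqrt_pos.mpr (by positivity : (0 : ℝ) < d)).ne'
  exact transpose_injective (vec_inj.mp (smul_right_injective _ hsq0 hAB))

theorem unambigSingleUse_pair {d : ℕ} {E₁ E₂ : QuantumOp d} (h₁ : ¬ E₁.supp ≤ E₂.supp)
    (h₂ : ¬ E₂.supp ≤ E₁.supp) : UnambigSingleUse ![E₁, E₂] := by
  have hd : d ≠ 0 := by
    rintro rfl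
    exact h₁ fun A _ => by simp [Subsingleton.elim A 0]
  exact ⟨d, Nat.pos_of_ne_zero hd, maxEntangled d, star_maxEntangled_dotProduct hd,
    QuantumOp.unambiguouslyDistinguishable_output_pair
      (kroneckerOneMulVecLin_maxEntangled_injective hd) h₁ h₂⟩

theorem two_ops_unambig_single_use_iff_general {d : ℕ} (E₁ E₂ : QuantumOp d) :
    UnambigSingleUse ![E₁, E₂] ↔
      (¬ E₁.supp ≤ E₂.supp) ∧ (¬ E₂.supp ≤ E₁.supp) :=
  ⟨fun h => ⟨h.not_supp_le (i := 0) (j := 1) (by decide),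
    h.not_supp_le (i := 1) (j := 0) (by decide)⟩,
    fun ⟨h₁, h₂⟩ => unambigSingleUse_pair h₁ h₂⟩

/-- two quantum operations can be unambiguously discriminated by a single
use iff neither support is contained in the other. -/
theorem two_ops_unambig_single_use_iff {d : ℕ} (hd : 0 < d) (E₁ E₂ : QuantumOp d) :
    UnambigSingleUse ![E₁, E₂] ↔
      (¬ E₁.supp ≤ E₂.supp) ∧ (¬ E₂.supp ≤ E₁.supp) :=
  two_ops_unambig_single_use_iff_general E₁ E₂
end
end

section
/- Let 0 < p < 1 and 0 < q < 1, and define the bit-flip channel E_1 with Kraus operators {√p I, √(1−p) X} and the phase-flip channel E_2 with Kraus operators {√q I, √(1−q) Z}. Then E_1 and E_2 can be unambiguously discriminated by a single use when an ancilla is allowed: there exist an ancilla dimension d_a and a unit vector ψ ∈ ℂ² ⊗ ℂ^{d_a} such that (E_1 ⊗ I)(|ψ⟩⟨ψ|) and (E_2 ⊗ I)(|ψ⟩⟨ψ|) are unambiguously distinguishable. -/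
open Matrix Kronecker
open scoped ComplexOrder

noncomputable section

/-- The Pauli X matrix. -/
def pauliX : Matrix (Fin 2) (Fin 2) ℂ := !![0, 1; 1, 0]

/-- The Pauli Z matrix. -/
def pauliZ : Matrix (Fin 2) (Fin 2) ℂ := !![1, 0; 0, -1]

/-- The output state Σ_k (K_k ⊗ I)|ψ⟩⟨ψ|(K_k ⊗ I)† of the quantum operation with Kraus
operators K on the input |ψ⟩⟨ψ|, with an ancilla of dimension da. -/
def outputOf {d m da : ℕ} (K : Fin m → Matrix (Fin d) (Fin d) ℂ)
    (ψ : Fin d × Fin da → ℂ) : Matrix (Fin d × Fin da) (Fin d × Fin da) ℂ :=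
  ∑ k, (K k ⊗ₖ (1 : Matrix (Fin da) (Fin da) ℂ)) * vecMulVec ψ (star ψ) *
    (K k ⊗ₖ (1 : Matrix (Fin da) (Fin da) ℂ))ᴴ

/-- Kraus operators {√p I, √(1-p) X} of the bit-flip channel. -/
def bitFlipK (p : ℝ) : Fin 2 → Matrix (Fin 2) (Fin 2) ℂ :=
  ![(Real.sqrt p : ℂ) • 1, (Real.sqrt (1 - p) : ℂ) • pauliX]

/-- Kraus operators {√q I, √(1-q) Z} of the phase-flip channel. -/
def phaseFlipK (q : ℝ) : Fin 2 → Matrix (Fin 2) (Fin 2) ℂ :=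
  ![(Real.sqrt q : ℂ) • 1, (Real.sqrt (1 - q) : ℂ) • pauliZ]

/-! Send one half of the maximally entangled state `Φ = vec 1 / √2` through the channel. Since
`(K ⊗ 1) Φ = vec K / √2`, overlaps of the output vectors are Hilbert–Schmidt inner products
`tr (M† K) / 2`, and `I, X, Z` are Hilbert–Schmidt orthogonal. Hence the bit-flip output is
supported on `span {Φ, XΦ}` and the phase-flip output on `span {Φ, ZΦ}`: the projector onto `XΦ`
never fires on the phase flip, the one onto `ZΦ` never on the bit flip, while they fire on their
own channel with probabilities `1 - p` and `1 - q`; the rest of the identity is the inconclusive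
outcome. -/

section StarProjection

variable {n : Type*} [Fintype n]

lemma IsStarProjection.posSemidef {P : Matrix n n ℂ} (hP : IsStarProjection P) :
    P.PosSemidef := by
  have h : Pᴴ * P = P := by
    rw [← star_eq_conjTranspose, hP.isSelfAdjoint.star_eq, hP.isIdempotentElem.eq]
  exact h ▸ posSemidef_conjTranspose_mul_self P

lemma isStarProjection_vecMulVec_star {v : n → ℂ} (hv : star v ⬝ᵥ v = 1) :
    IsStarProjection (vecMulVec v (star v)) :=
  ⟨by rw [IsIdempotentElem, vecMulVec_mul_vecMulVec, hv, one_smul],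
    by rw [IsSelfAdjoint, star_eq_conjTranspose, conjTranspose_vecMulVec, star_star]⟩

lemma vecMulVec_star_mul_vecMulVec_star_eq_zero {v w : n → ℂ} (h : star v ⬝ᵥ w = 0) :
    vecMulVec v (star v) * vecMulVec w (star w) = 0 := by
  rw [vecMulVec_mul_vecMulVec, h, zero_smul]
  ext
  simp [vecMulVec_apply]

lemma trace_vecMulVec_star_mul (v : n → ℂ) (M : Matrix n n ℂ) :
    (vecMulVec v (star v) * M).trace = star v ⬝ᵥ (M *ᵥ v) := by
  rw [vecMulVec_mul, trace_vecMulVec, dotProduct_comm, dotProduct_mulVec]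

lemma star_dotProduct_vecMulVec_star_mulVec (u v : n → ℂ) :
    star v ⬝ᵥ (vecMulVec u (star u) *ᵥ v) = Complex.normSq (star v ⬝ᵥ u) := by
  rw [vecMulVec_mulVec, op_smul_eq_smul, dotProduct_smul, smul_eq_mul, star_dotProduct u,
    Complex.normSq_eq_conj_mul_self, Complex.star_def]

lemma mul_vecMulVec_star_mul_conjTranspose (A : Matrix n n ℂ) (ψ : n → ℂ) :
    A * vecMulVec ψ (star ψ) * Aᴴ = vecMulVec (A *ᵥ ψ) (star (A *ᵥ ψ)) := by
  rw [mul_vecMulVec, vecMulVec_mul, star_mulVec]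

end StarProjection

theorem unambiguouslyDistinguishable_of_orthonormal {μ : Type*} [Fintype μ] [DecidableEq μ]
    {σ₁ σ₂ : Matrix μ μ ℂ} {v₁ v₂ : μ → ℂ}
    (hv₁ : star v₁ ⬝ᵥ v₁ = 1) (hv₂ : star v₂ ⬝ᵥ v₂ = 1) (hv₁₂ : star v₁ ⬝ᵥ v₂ = 0)
    (h₁₂ : star v₁ ⬝ᵥ (σ₂ *ᵥ v₁) = 0) (h₂₁ : star v₂ ⬝ᵥ (σ₁ *ᵥ v₂) = 0)
    (h₁ : 0 < star v₁ ⬝ᵥ (σ₁ *ᵥ v₁)) (h₂ : 0 < star v₂ ⬝ᵥ (σ₂ *ᵥ v₂)) :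
    UnambiguouslyDistinguishable ![σ₁, σ₂] := by
  set P₁ := vecMulVec v₁ (star v₁)
  set P₂ := vecMulVec v₂ (star v₂)
  have hP : IsStarProjection (P₁ + P₂) :=
    (isStarProjection_vecMulVec_star hv₁).add (isStarProjection_vecMulVec_star hv₂)
      (vecMulVec_star_mul_vecMulVec_star_eq_zero hv₁₂)
  refine ⟨1 - (P₁ + P₂), ![P₁, P₂], hP.one_sub.posSemidef, fun i ↦ ?_, ?_, fun i j hij ↦ ?_,
    fun i ↦ ?_⟩
  · fin_cases i <;> exact posSemidef_vecMulVec_self_star _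
  · simp [Fin.sum_univ_two]
  · fin_cases i <;> fin_cases j <;> simp_all [trace_vecMulVec_star_mul, P₁, P₂]
  · fin_cases i <;> simpa [trace_vecMulVec_star_mul, P₁, P₂]

lemma star_dotProduct_outputOf_mulVec {d m da : ℕ} (K : Fin m → Matrix (Fin d) (Fin d) ℂ)
    (ψ v : Fin d × Fin da → ℂ) :
    star v ⬝ᵥ (outputOf K ψ *ᵥ v) =
      ((∑ k, Complex.normSq (star v ⬝ᵥ ((K k ⊗ₖ (1 : Matrix (Fin da) (Fin da) ℂ)) *ᵥ ψ)) :
        ℝ) : ℂ) := by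
  simp only [outputOf, mul_vecMulVec_star_mul_conjTranspose, sum_mulVec, dotProduct_sum,
    star_dotProduct_vecMulVec_star_mulVec, Complex.ofReal_sum]

section EntangledVec

variable {n : Type*} [Fintype n]

/-- `entangledVec A (i, j) = A i j / √(card n)`; `entangledVec 1` is the maximally entangled
state. -/
def entangledVec (A : Matrix n n ℂ) : n × n → ℂ :=
  vec ((((Real.sqrt (Fintype.card n))⁻¹ : ℝ) : ℂ) • A)ᵀ

lemma kronecker_one_mulVec_entangledVec [DecidableEq n] (K A : Matrix n n ℂ) :
    (K ⊗ₖ (1 : Matrix n n ℂ)) *ᵥ entangledVec A = entangledVec (K * A) := by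
  rw [entangledVec, entangledVec, kronecker_mulVec_vec, Matrix.one_mul, ← transpose_mul,
    mul_smul_comm]

lemma star_entangledVec_dotProduct_entangledVec (A B : Matrix n n ℂ) :
    star (entangledVec A) ⬝ᵥ entangledVec B = (Aᴴ * B).trace / Fintype.card n := by
  rw [entangledVec, entangledVec, star_vec_dotProduct_vec,
    conjTranspose_transpose_eq_transpose_conjTranspose, trace_transpose_mul, conjTranspose_smul,
    smul_mul_smul_comm, trace_smul, Complex.star_def, Complex.conj_ofReal, smul_eq_mul,
    ← Complex.ofReal_mul, ← mul_inv, Real.mul_self_sqrt (Nat.cast_nonneg _)]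
  push_cast
  rw [inv_mul_eq_div]

end EntangledVec

lemma star_entangledVec_dotProduct_outputOf_mulVec {d m : ℕ}
    (K : Fin m → Matrix (Fin d) (Fin d) ℂ) (A M : Matrix (Fin d) (Fin d) ℂ) :
    star (entangledVec M) ⬝ᵥ (outputOf K (entangledVec A) *ᵥ entangledVec M) =
      ((∑ k, Complex.normSq ((Mᴴ * (K k * A)).trace / d) : ℝ) : ℂ) := by
  simp only [star_dotProduct_outputOf_mulVec, kronecker_one_mulVec_entangledVec,
    star_entangledVec_dotProduct_entangledVec, Fintype.card_fin]

@[simp] lemma conjTranspose_pauliX : pauliXᴴ = pauliX := by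
  ext i j; fin_cases i <;> fin_cases j <;> simp [pauliX]

@[simp] lemma conjTranspose_pauliZ : pauliZᴴ = pauliZ := by
  ext i j; fin_cases i <;> fin_cases j <;> simp [pauliZ]

@[simp] lemma pauliX_mul_self : pauliX * pauliX = 1 := by
  ext i j; fin_cases i <;> fin_cases j <;> simp [pauliX]

@[simp] lemma pauliZ_mul_self : pauliZ * pauliZ = 1 := by
  ext i j; fin_cases i <;> fin_cases j <;> simp [pauliZ]

@[simp] lemma trace_pauliX : pauliX.trace = 0 := by simp [pauliX, trace_fin_two]

@[simp] lemma trace_pauliZ : pauliZ.trace = 0 := by simp [pauliZ, trace_fin_two]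

@[simp] lemma trace_pauliX_mul_pauliZ : (pauliX * pauliZ).trace = 0 := by
  simp [pauliX, pauliZ, trace_fin_two]

@[simp] lemma trace_pauliZ_mul_pauliX : (pauliZ * pauliX).trace = 0 := by
  simp [pauliX, pauliZ, trace_fin_two]

theorem bitFlip_phaseFlip_unambig_with_ancilla_general (p q : ℝ)
    (hp₁ : p < 1) (hq₁ : q < 1) :
    ∃ da : ℕ, 0 < da ∧ ∃ ψ : Fin 2 × Fin da → ℂ, star ψ ⬝ᵥ ψ = 1 ∧
      UnambiguouslyDistinguishable ![outputOf (bitFlipK p) ψ, outputOf (phaseFlipK q) ψ] := by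
  refine ⟨2, two_pos, entangledVec 1, by simp [star_entangledVec_dotProduct_entangledVec], ?_⟩
  have hp : 0 ≤ 1 - p := sub_nonneg.2 hp₁.le
  have hq : 0 ≤ 1 - q := sub_nonneg.2 hq₁.le
  apply unambiguouslyDistinguishable_of_orthonormal
    (v₁ := entangledVec pauliX) (v₂ := entangledVec pauliZ) <;>
  simp [star_entangledVec_dotProduct_entangledVec, star_entangledVec_dotProduct_outputOf_mulVec,
    Fin.sum_univ_two, bitFlipK, phaseFlipK, Real.mul_self_sqrt hp, Real.mul_self_sqrt hq] <;>
  exact_mod_cast ‹_›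

/-- for 0 < p,q < 1, the bit-flip and phase-flip channels can be
unambiguously discriminated by a single use when an ancilla is allowed. -/
theorem bitFlip_phaseFlip_unambig_with_ancilla (p q : ℝ)
    (hp₀ : 0 < p) (hp₁ : p < 1) (hq₀ : 0 < q) (hq₁ : q < 1) :
    ∃ da : ℕ, 0 < da ∧ ∃ ψ : Fin 2 × Fin da → ℂ, star ψ ⬝ᵥ ψ = 1 ∧
      UnambiguouslyDistinguishable ![outputOf (bitFlipK p) ψ, outputOf (phaseFlipK q) ψ] :=
  bitFlip_phaseFlip_unambig_with_ancilla_general p q hp₁ hq₁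
end
end
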